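/- Let f : [0,1] → [0,1] be unimodal with critical point c (strictly increasing on [0,c], strictly decreasing on [c,1]). For x ∈ [0,1] let ω(x) be the itinerary of x (ω_k = L, C, or R according as f^k(x) < c, = c, or > c). Then x < y implies ω(x) ⪯ ω(y) in the parity-lexicographic order. -/
import Mathlib


/-- The parity-lexicographic strict order on infinite words over `{L, C, R} ≅ Fin 3`
(`L = 0`, `C = 1`, `R = 2`). -/
def parityLexLt (A B : ℕ → Fin 3) : Prop :=
  ∃ N, (∀ i < N, A i = B i) ∧
    (if Even ((Finset.range N).filter (fun i => A i = 2)).card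
      then A N < B N else B N < A N)

/-- The itinerary of a point under a map with critical point `c`:
`L = 0` if `f^[k] x < c`, `C = 1` if `f^[k] x = c`, `R = 2` if `f^[k] x > c`. -/
noncomputable def itinerary (f : ℝ → ℝ) (c : ℝ) (x : ℝ) : ℕ → Fin 3 :=
  fun k => if f^[k] x < c then 0 else if f^[k] x = c then 1 else 2

lemma itinerary_eq_zero {f : ℝ → ℝ} {c x : ℝ} {k : ℕ} :
    itinerary f c x k = 0 ↔ f^[k] x < c := by
  unfold itinerary
  rcases lt_trichotomy (f^[k] x) c with h | h | h
  · simp [h]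
  · simp [h, lt_irrefl]
  · simp [h.not_gt, h.ne']

lemma itinerary_eq_one {f : ℝ → ℝ} {c x : ℝ} {k : ℕ} :
    itinerary f c x k = 1 ↔ f^[k] x = c := by
  unfold itinerary
  rcases lt_trichotomy (f^[k] x) c with h | h | h
  · simp [h, h.ne]
  · simp [h, lt_irrefl]
  · simp [h.not_gt, h.ne']

lemma itinerary_eq_two {f : ℝ → ℝ} {c x : ℝ} {k : ℕ} :
    itinerary f c x k = 2 ↔ c < f^[k] x := by
  unfold itinerary
  rcases lt_trichotomy (f^[k] x) c with h | h | h
  · simp [h, h.asymm]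
  · simp [h, lt_irrefl]
  · simp [h.not_gt, h.ne', h]

/-- The itinerary map of a unimodal map is monotone: `x < y` implies
`ω(x) ⪯ ω(y)` in the parity-lexicographic order. -/
theorem itinerary_monotone (f : ℝ → ℝ) (c : ℝ)
    (hc : c ∈ Set.Ioo (0 : ℝ) 1)
    (hmaps : Set.MapsTo f (Set.Icc 0 1) (Set.Icc 0 1))
    (hmono : StrictMonoOn f (Set.Icc 0 c)) (hanti : StrictAntiOn f (Set.Icc c 1))
    (x y : ℝ) (hx : x ∈ Set.Icc (0 : ℝ) 1) (hy : y ∈ Set.Icc (0 : ℝ) 1)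
    (hxy : x < y) :
    parityLexLt (itinerary f c x) (itinerary f c y) ∨
      itinerary f c x = itinerary f c y := by
  classical
  by_cases heq : itinerary f c x = itinerary f c y
  · exact Or.inr heq
  refine Or.inl ?_
  have hne : ∃ n, itinerary f c x n ≠ itinerary f c y n := by
    by_contra h
    push_neg at h
    exact heq (funext h)
  set N := Nat.find hne with hN
  have hpre : ∀ i < N, itinerary f c x i = itinerary f c y i := fun i hi => not_not.mp (Nat.find_min hne hi)
  have hAB : itinerary f c x N ≠ itinerary f c y N := Nat.find_spec hne
  have hxk : ∀ k, f^[k] x ∈ Set.Icc (0:ℝ) 1 := fun k => hmaps.iterate k hx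
  have hyk : ∀ k, f^[k] y ∈ Set.Icc (0:ℝ) 1 := fun k => hmaps.iterate k hy
  have key : ∀ k ≤ N,
      (Even ((Finset.range k).filter (fun i => itinerary f c x i = 2)).card ∧ f^[k] x < f^[k] y)
      ∨ (¬ Even ((Finset.range k).filter (fun i => itinerary f c x i = 2)).card ∧
          f^[k] y < f^[k] x) := by
    intro k
    induction k with
    | zero => intro _; left; simpa using hxy
    | succ k ih =>
      intro hk
      have hkN : k < N := Nat.lt_of_succ_le hk
      have ihk := ih hkN.le
      have hAkB : itinerary f c x k = itinerary f c y k := hpre k hkN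
      have cardstep : ((Finset.range (k+1)).filter (fun i => itinerary f c x i = 2)).card =
          ((Finset.range k).filter (fun i => itinerary f c x i = 2)).card +
            (if itinerary f c x k = 2 then 1 else 0) := by
        rw [Finset.range_add_one, Finset.filter_insert]
        split_ifs with h
        · rw [Finset.card_insert_of_notMem (by simp)]
        · simp
      set u := f^[k] x with hu
      set v := f^[k] y with hv
      rcases lt_trichotomy u c with huc | huc | huc
      · -- symbol L : both below c
        have hA0 : itinerary f c x k = 0 := itinerary_eq_zero.mpr huc
        have hvc : v < c := itinerary_eq_zero.mp (hAkB ▸ hA0)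
        have hum : u ∈ Set.Icc (0:ℝ) c := ⟨(hxk k).1, huc.le⟩
        have hvm : v ∈ Set.Icc (0:ℝ) c := ⟨(hyk k).1, hvc.le⟩
        have hcard : ((Finset.range (k+1)).filter (fun i => itinerary f c x i = 2)).card =
            ((Finset.range k).filter (fun i => itinerary f c x i = 2)).card := by
          simp [cardstep, hA0]
        rcases ihk with ⟨hev, hlt⟩ | ⟨hev, hlt⟩
        · left
          refine ⟨hcard ▸ hev, ?_⟩
          have := hmono hum hvm hlt
          simpa [Function.iterate_succ_apply', ← hu, ← hv] using this
        · right
          refine ⟨hcard ▸ hev, ?_⟩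
          have := hmono hvm hum hlt
          simpa [Function.iterate_succ_apply', ← hu, ← hv] using this
      · -- symbol C : both equal c, impossible since orbits are strictly ordered
        exfalso
        have hA1 : itinerary f c x k = 1 := itinerary_eq_one.mpr huc
        have hvc : v = c := itinerary_eq_one.mp (hAkB ▸ hA1)
        rcases ihk with ⟨_, hlt⟩ | ⟨_, hlt⟩ <;>
          simp [huc, hvc] at hlt
      · -- symbol R : both above c, parity flips
        have hA2 : itinerary f c x k = 2 := itinerary_eq_two.mpr huc
        have hvc : c < v := itinerary_eq_two.mp (hAkB ▸ hA2)
        have hum : u ∈ Set.Icc c 1 := ⟨huc.le, (hxk k).2⟩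
        have hvm : v ∈ Set.Icc c 1 := ⟨hvc.le, (hyk k).2⟩
        have hcard : ((Finset.range (k+1)).filter (fun i => itinerary f c x i = 2)).card =
            ((Finset.range k).filter (fun i => itinerary f c x i = 2)).card + 1 := by
          simp [cardstep, hA2]
        rcases ihk with ⟨hev, hlt⟩ | ⟨hev, hlt⟩
        · right
          constructor
          · rw [hcard]
            simpa [Nat.even_add_one] using hev
          · have := hanti hum hvm hlt
            simpa [Function.iterate_succ_apply', ← hu, ← hv] using this
        · left
          constructor
          · rw [hcard]
            simpa [Nat.even_add_one, Nat.not_even_iff_odd] using hev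
          · have := hanti hvm hum hlt
            simpa [Function.iterate_succ_apply', ← hu, ← hv] using this
  refine ⟨N, hpre, ?_⟩
  have hkey := key N le_rfl
  split_ifs with hpar
  · -- even parity : f^[N] x < f^[N] y, show A N < B N
    have hlt : f^[N] x < f^[N] y := by
      rcases hkey with ⟨_, h⟩ | ⟨h, _⟩
      · exact h
      · exact absurd hpar h
    rcases lt_trichotomy (f^[N] y) c with hvc | hvc | hvc
    · exact absurd ((itinerary_eq_zero.mpr (hlt.trans hvc)).trans
        (itinerary_eq_zero.mpr hvc).symm) hAB
    · have hB1 : itinerary f c y N = 1 := itinerary_eq_one.mpr hvc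
      have hA0 : itinerary f c x N = 0 := itinerary_eq_zero.mpr (hvc ▸ hlt)
      rw [hA0, hB1]; decide
    · have hB2 : itinerary f c y N = 2 := itinerary_eq_two.mpr hvc
      rcases lt_trichotomy (f^[N] x) c with huc | huc | huc
      · rw [itinerary_eq_zero.mpr huc, hB2]; decide
      · rw [itinerary_eq_one.mpr huc, hB2]; decide
      · exact absurd ((itinerary_eq_two.mpr huc).trans hB2.symm) hAB
  · -- odd parity : f^[N] y < f^[N] x, show B N < A N
    have hlt : f^[N] y < f^[N] x := by
      rcases hkey with ⟨h, _⟩ | ⟨_, h⟩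
      · exact absurd h hpar
      · exact h
    rcases lt_trichotomy (f^[N] x) c with huc | huc | huc
    · exact absurd ((itinerary_eq_zero.mpr huc).trans
        (itinerary_eq_zero.mpr (hlt.trans huc)).symm) hAB
    · have hA1 : itinerary f c x N = 1 := itinerary_eq_one.mpr huc
      have hB0 : itinerary f c y N = 0 := itinerary_eq_zero.mpr (huc ▸ hlt)
      rw [hA1, hB0]; decide
    · have hA2 : itinerary f c x N = 2 := itinerary_eq_two.mpr huc
      rcases lt_trichotomy (f^[N] y) c with hvc | hvc | hvc
      · rw [itinerary_eq_zero.mpr hvc, hA2]; decide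
      · rw [itinerary_eq_one.mpr hvc, hA2]; decide
      · exact absurd (hA2.trans (itinerary_eq_two.mpr hvc).symm) hAB
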